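/- arXiv:2412.09313 — 3 statements merged into one kernel-verified Lean document; each statement's English description precedes it below -/
import Mathlib

section
/- Let m = 808017424794512875886459904961710757005754368000000000 (the order of the Monster group). For every divisor d of 2·5·7^6·59·71, set x = 2²·41·d. Then x divides m, and m/x ≡ 1 (mod 41) holds if and only if x = 1640 or x = 163016. -/
/-!
Put `M = m / (2² · 41)`, so that `m / x = M / d`. Since `d` is prime to 41, `M / d ≡ 1 (mod 41)`
holds exactly when `d ≡ M ≡ 10 (mod 41)`, and among the 112 divisors `d` of `2 · 5 · 7⁶ · 59 · 71`
only `d = 10` and `d = 2 · 7 · 71 = 994` satisfy this.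
-/

theorem Nat.div_modEq_one_iff_modEq {N d p : ℕ} (hd : d ∣ N) (hdp : d.Coprime p) :
    N / d ≡ 1 [MOD p] ↔ d ≡ N [MOD p] := by
  have hN : N / d * d = N := Nat.div_mul_cancel hd
  constructor
  · intro h
    simpa [hN] using (h.mul_right d).symm
  · intro h
    refine Nat.ModEq.cancel_right_of_coprime (c := d) (Nat.coprime_comm.mp hdp) ?_
    simpa [hN] using h.symm

theorem mod_41_eq_10_iff_of_mem_divisors :
    ∀ d ∈ Nat.divisors (2 * 5 * 7 ^ 6 * 59 * 71), d % 41 = 10 ↔ d = 10 ∨ d = 994 := by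
  rw [Nat.divisors_mul, Nat.divisors_mul, Nat.divisors_mul, Nat.divisors_mul,
    Nat.Prime.divisors Nat.prime_two, Nat.Prime.divisors Nat.prime_five,
    Nat.Prime.divisors (by norm_num : Nat.Prime 59), Nat.Prime.divisors (by norm_num : Nat.Prime 71),
    Nat.divisors_prime_pow (by norm_num : Nat.Prime 7)]
  decide +kernel

/-- Sylow-counting step for the normalizer of a cyclic subgroup of order 41
in the Monster group. -/
theorem stmt_7 (d : ℕ) (hd : d ∣ 2 * 5 * 7 ^ 6 * 59 * 71) :
    let m : ℕ := 808017424794512875886459904961710757005754368000000000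
    let x : ℕ := 2 ^ 2 * 41 * d
    (x ∣ m) ∧ ((m / x) % 41 = 1 ↔ (x = 1640 ∨ x = 163016)) := by
  intro m x
  have hdM : d ∣ m / (2 ^ 2 * 41) := hd.trans (by norm_num)
  have hdp : d.Coprime 41 := Nat.Coprime.coprime_dvd_left hd (by norm_num)
  have hM : m / (2 ^ 2 * 41) % 41 = 10 := by norm_num
  refine ⟨Nat.mul_dvd_of_dvd_div (by norm_num) hdM, ?_⟩
  calc m / x % 41 = 1 ↔ m / (2 ^ 2 * 41) / d ≡ 1 [MOD 41] := by
        rw [Nat.div_div_eq_div_mul]; rfl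
    _ ↔ d % 41 = 10 := by
        rw [Nat.div_modEq_one_iff_modEq hdM hdp, Nat.ModEq, hM]
    _ ↔ d = 10 ∨ d = 994 :=
        mod_41_eq_10_iff_of_mem_divisors d (Nat.mem_divisors.mpr ⟨hd, by norm_num⟩)
    _ ↔ x = 1640 ∨ x = 163016 := by omega
end

section
/- Let G be a finite group and V a finite-dimensional complex representation of G whose character χ is integer-valued, i.e. for every h ∈ G the value χ(h) is a rational integer. Then for every prime p and every g ∈ G, the integer χ(g) − χ(g^p) is divisible by p. -/
/-!
Since `ρ g` has finite order it is diagonalisable, with roots of unity `μᵢ` as eigenvalues, so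
`χ g = ∑ μᵢ` and `χ (g ^ p) = ∑ μᵢ ^ p`. In the ring of algebraic integers
`(∑ μᵢ) ^ p ≡ ∑ μᵢ ^ p (mod p)`, so the rational integer `χ g ^ p - χ (g ^ p)` is divisible by `p`
among algebraic integers, hence in `ℤ`; Fermat's little theorem `χ g ^ p ≡ χ g` concludes.
-/

open Module

namespace Module.End

variable {K V : Type*} [Field K] [AddCommGroup V] [Module K V]

lemma mapsTo_pow_eigenspace (f : End K V) (μ : K) (n : ℕ) :
    Set.MapsTo (f ^ n) (f.eigenspace μ) (f.eigenspace μ) :=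
  mapsTo_genEigenspace_of_comm ((Commute.refl f).pow_right n) μ 1

lemma restrict_pow_eigenspace (f : End K V) (μ : K) (n : ℕ) :
    (f ^ n).restrict (f.mapsTo_pow_eigenspace μ n) = μ ^ n • LinearMap.id := by
  have h := pow_restrict n (f.mapsTo_pow_eigenspace μ 1) (f.mapsTo_pow_eigenspace μ n)
  simp only [pow_one] at h
  rw [← h, restrict_eigenspace, _root_.smul_pow, ← one_eq_id, one_pow]

lemma isSemisimple_of_pow_eq_one {f : End K V} {m : ℕ} (hm : (m : K) ≠ 0) (hf : f ^ m = 1) :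
    f.IsSemisimple :=
  isSemisimple_of_squarefree_aeval_eq_zero
    (Polynomial.X_pow_sub_one_separable_iff.mpr hm).squarefree (by simp [hf])

lemma HasEigenvalue.pow_eq_one_of_pow_eq_one {f : End K V} {μ : K} {m : ℕ}
    (hμ : f.HasEigenvalue μ) (hf : f ^ m = 1) : μ ^ m = 1 := by
  obtain ⟨v, hv⟩ := hμ.exists_hasEigenvector
  have hv_fixed := hv.pow_apply m
  rw [hf, one_apply] at hv_fixed
  exact smul_left_injective K hv.2 (by simpa using hv_fixed.symm)

variable [IsAlgClosed K] [FiniteDimensional K V] {f : End K V}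

theorem IsSemisimple.trace_pow_eq_sum (hf : f.IsSemisimple) (n : ℕ) :
    LinearMap.trace K V (f ^ n) =
      ∑ μ ∈ f.finite_hasEigenvalue.toFinset, finrank K (f.eigenspace μ) • μ ^ n := by
  classical
  have hdec : DirectSum.IsInternal f.eigenspace :=
    DirectSum.isInternal_submodule_of_iSupIndep_of_iSup_eq_top f.eigenspaces_iSupIndep
      hf.iSup_eigenspace_eq_top
  rw [LinearMap.trace_eq_sum_trace_restrict' hdec f.finite_hasEigenvalue
    (f.mapsTo_pow_eigenspace · n)]
  refine Finset.sum_congr rfl fun μ _ ↦ ?_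
  rw [restrict_pow_eigenspace, map_smul, LinearMap.trace_id, nsmul_eq_mul, smul_eq_mul, mul_comm]

theorem IsSemisimple.exists_multiset_trace_pow_eq (hf : f.IsSemisimple) :
    ∃ s : Multiset K, (∀ μ ∈ s, f.HasEigenvalue μ) ∧
      ∀ n : ℕ, LinearMap.trace K V (f ^ n) = (s.map (· ^ n)).sum := by
  refine ⟨∑ μ ∈ f.finite_hasEigenvalue.toFinset, .replicate (finrank K (f.eigenspace μ)) μ,
    fun μ hμ ↦ ?_, fun n ↦ ?_⟩
  · obtain ⟨ν, hν, hμν⟩ := Multiset.mem_sum.mp hμ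
    rw [Multiset.eq_of_mem_replicate hμν]
    simpa using hν
  · rw [hf.trace_pow_eq_sum, ← Multiset.coe_mapAddMonoidHom, map_sum,
      ← Multiset.coe_sumAddMonoidHom, map_sum]
    simp [Multiset.map_replicate, Multiset.sum_replicate]

end Module.End

theorem Multiset.natCast_dvd_sum_pow_sub_sum_map_pow {R : Type*} [CommRing R] {p : ℕ}
    (hp : p.Prime) (s : Multiset R) : (p : R) ∣ s.sum ^ p - (s.map (· ^ p)).sum := by
  by_cases hunit : IsUnit (p : R)
  · exact hunit.dvd
  have := Fact.mk hp
  -- Frobenius is additive on `R ⧸ (p)`, which has characteristic `p` as `p` is not a unit.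
  have := CharP.quotient R p hunit
  rw [← Ideal.mem_span_singleton, ← Ideal.Quotient.eq]
  simp [map_multiset_sum, Multiset.map_map, multiset_sum_pow_char]

theorem Int.dvd_of_cast_eq_mul_of_isIntegral {K : Type*} [Field K] [CharZero K] {n a : ℤ} {z : K}
    (hz : IsIntegral ℤ z) (h : (a : K) = n * z) : n ∣ a := by
  rcases eq_or_ne n 0 with rfl | hn
  · simp_all
  have hzq : algebraMap ℚ K (a / n) = z := by
    rw [map_div₀, map_intCast, map_intCast, h, mul_div_cancel_left₀ _ (Int.cast_ne_zero.mpr hn)]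
  obtain ⟨y, hy⟩ := IsIntegrallyClosed.isIntegral_iff.mp
    ((isIntegral_algebraMap_iff (algebraMap ℚ K).injective).mp (hzq ▸ hz))
  refine ⟨y, ?_⟩
  rw [algebraMap_int_eq, eq_intCast] at hy
  have : (a : ℚ) = n * y := by rw [hy, mul_div_cancel₀ _ (Int.cast_ne_zero.mpr hn)]
  exact_mod_cast this

theorem Multiset.prime_dvd_sum_sub_sum_map_pow_of_isIntegral {K : Type*} [Field K] [CharZero K]
    {p : ℕ} (hp : p.Prime) (s : Multiset K) (hs : ∀ μ ∈ s, IsIntegral ℤ μ) {a b : ℤ}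
    (ha : s.sum = a) (hb : (s.map (· ^ p)).sum = b) : (p : ℤ) ∣ a - b := by
  lift s to Multiset (integralClosure ℤ K) using hs
  obtain ⟨z, hz⟩ := s.natCast_dvd_sum_pow_sub_sum_map_pow hp
  have hdvd : (p : ℤ) ∣ a ^ p - b := by
    refine Int.dvd_of_cast_eq_mul_of_isIntegral z.2 ?_
    simpa [← ha, ← hb, Multiset.map_map, Function.comp_def] using
      congrArg ((↑) : integralClosure ℤ K → K) hz
  simpa using dvd_sub hdvd (Int.prime_dvd_pow_self_sub hp a)

namespace Module.End

theorem prime_dvd_trace_sub_trace_pow_of_pow_eq_one {K V : Type*} [Field K] [CharZero K]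
    [IsAlgClosed K] [AddCommGroup V] [Module K V] [FiniteDimensional K V] {f : End K V} {m : ℕ}
    (hm : m ≠ 0) (hf : f ^ m = 1) {p : ℕ} (hp : p.Prime) {a b : ℤ}
    (ha : LinearMap.trace K V f = a) (hb : LinearMap.trace K V (f ^ p) = b) :
    (p : ℤ) ∣ a - b := by
  obtain ⟨s, hs_eig, hs_trace⟩ :=
    (isSemisimple_of_pow_eq_one (Nat.cast_ne_zero.mpr hm) hf).exists_multiset_trace_pow_eq
  refine s.prime_dvd_sum_sub_sum_map_pow_of_isIntegral hp (fun μ hμ ↦ ?_) ?_ ?_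
  · refine IsIntegral.of_pow (Nat.pos_of_ne_zero hm) ?_
    rw [(hs_eig μ hμ).pow_eq_one_of_pow_eq_one hf]
    exact isIntegral_one
  · simpa [← ha] using (hs_trace 1).symm
  · rw [← hb, hs_trace]

end Module.End

/-- If the character of a finite-dimensional complex representation of a finite group
takes integer values, then `χ(g) ≡ χ(g^p) (mod p)` for every prime `p`. -/
theorem stmt_10 {G : Type*} [Group G] [Finite G] {V : Type*} [AddCommGroup V] [Module ℂ V]
    [FiniteDimensional ℂ V] (ρ : Representation ℂ G V) (χ : G → ℤ)
    (hχ : ∀ h : G, LinearMap.trace ℂ V (ρ h) = (χ h : ℂ))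
    (p : ℕ) (hp : p.Prime) (g : G) :
    (p : ℤ) ∣ χ g - χ (g ^ p) := by
  refine Module.End.prime_dvd_trace_sub_trace_pow_of_pow_eq_one (orderOf_pos g).ne' ?_ hp
    (hχ g) ?_
  · rw [← map_pow, pow_orderOf_eq_one, map_one]
  · rw [← map_pow, hχ]
end

section
/- Let G be a group, let V be a finite-dimensional complex representation of G with character χ, let n ≥ 1 and p be natural numbers, and let σ : ℂ → ℂ be a ring homomorphism such that σ(z) = z^p for every complex number z with z^n = 1. Then for every g ∈ G with g^n = 1, one has σ(χ(g)) = χ(g^p). -/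
/-- Compatibility of Galois automorphisms with power maps: if `σ : ℂ → ℂ` is a ring
homomorphism raising all `n`-th roots of unity to their `p`-th powers, then for the
character `χ` of a finite-dimensional complex representation and any `g` with `g^n = 1`,
`σ(χ(g)) = χ(g^p)`. -/
theorem stmt_12 {G : Type*} [Group G] {V : Type*} [AddCommGroup V] [Module ℂ V]
    [FiniteDimensional ℂ V] (ρ : Representation ℂ G V) (n p : ℕ) (hn : 1 ≤ n)
    (σ : ℂ →+* ℂ) (hσ : ∀ z : ℂ, z ^ n = 1 → σ z = z ^ p)
    (g : G) (hg : g ^ n = 1) :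
    σ (LinearMap.trace ℂ V (ρ g)) = LinearMap.trace ℂ V (ρ (g ^ p)) := by
  classical
  set f : Module.End ℂ V := ρ g with hfdef
  have hfn : f ^ n = 1 := by rw [hfdef, ← map_pow, hg, map_one]
  -- f is semisimple since it satisfies the squarefree polynomial X^n - 1
  have hsf : Squarefree (Polynomial.X ^ n - 1 : Polynomial ℂ) := by
    refine (Polynomial.X_pow_sub_one_separable_iff.mpr ?_).squarefree
    exact_mod_cast Nat.cast_ne_zero.mpr (by omega)
  have hss : f.IsSemisimple := by
    refine Module.End.isSemisimple_of_squarefree_aeval_eq_zero hsf ?_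
    simp [map_sub, map_pow, Polynomial.aeval_X, hfn]
  have htop : ⨆ μ : ℂ, f.eigenspace μ = ⊤ := by
    have h := Module.End.iSup_maxGenEigenspace_eq_top f
    simpa only [hss.isFinitelySemisimple.maxGenEigenspace_eq_eigenspace] using h
  have hind := f.eigenspaces_iSupIndep
  have hfin : {μ : ℂ | f.eigenspace μ ≠ ⊥}.Finite :=
    WellFoundedGT.finite_ne_bot_of_iSupIndep hind
  have hInt : DirectSum.IsInternal (fun μ : ℂ ↦ f.eigenspace μ) :=
    (DirectSum.isInternal_submodule_iff_iSupIndep_and_iSup_eq_top _).mpr ⟨hind, htop⟩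
  -- eigenvectors behave well under powers
  have key : ∀ (μ : ℂ) (m : ℕ) (x : V), f x = μ • x → (f ^ m) x = μ ^ m • x := by
    intro μ m x hx
    induction m with
    | zero => simp
    | succ k ih =>
      rw [pow_succ', pow_succ']
      calc (f * f ^ k) x = f ((f ^ k) x) := rfl
        _ = f (μ ^ k • x) := by rw [ih]
        _ = μ ^ k • f x := map_smul f _ _
        _ = μ ^ k • (μ • x) := by rw [hx]
        _ = (μ * μ ^ k) • x := by rw [smul_smul, mul_comm]
  have hmapsf : ∀ μ : ℂ, Set.MapsTo f (f.eigenspace μ) (f.eigenspace μ) := by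
    intro μ x hx
    simp only [SetLike.mem_coe, Module.End.mem_eigenspace_iff] at hx ⊢
    rw [hx, map_smul, hx]
  have hmapsp : ∀ μ : ℂ, Set.MapsTo (f ^ p) (f.eigenspace μ) (f.eigenspace μ) := by
    intro μ x hx
    simp only [SetLike.mem_coe] at hx ⊢
    have hx' := Module.End.mem_eigenspace_iff.mp hx
    rw [Module.End.mem_eigenspace_iff, key μ p x hx', map_smul, hx', smul_smul, smul_smul,
      mul_comm]
  have hρp : ρ (g ^ p) = f ^ p := by rw [hfdef, map_pow]
  rw [hρp,
    LinearMap.trace_eq_sum_trace_restrict' hInt hfin hmapsf,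
    LinearMap.trace_eq_sum_trace_restrict' hInt hfin hmapsp, map_sum]
  refine Finset.sum_congr rfl fun μ hμ ↦ ?_
  have hne : f.eigenspace μ ≠ ⊥ := by simpa using hfin.mem_toFinset.mp hμ
  -- μ is an n-th root of unity
  obtain ⟨x, hx, hx0⟩ := Submodule.exists_mem_ne_zero_of_ne_bot hne
  have hxe : f x = μ • x := Module.End.mem_eigenspace_iff.mp hx
  have hμn : μ ^ n = 1 := by
    have h1 : (f ^ n) x = μ ^ n • x := key μ n x hxe
    rw [hfn] at h1
    have : (μ ^ n - 1) • x = 0 := by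
      rw [sub_smul, one_smul, ← h1]
      simp [Module.End.one_apply]
    rcases smul_eq_zero.mp this with h | h
    · exact sub_eq_zero.mp h
    · exact absurd h hx0
  have h1 : f.restrict (hmapsf μ) = μ • (LinearMap.id : f.eigenspace μ →ₗ[ℂ] f.eigenspace μ) := by
    ext y
    exact congrArg Subtype.val (Subtype.ext (Module.End.mem_eigenspace_iff.mp y.2) :
      (⟨f y, hmapsf μ y.2⟩ : f.eigenspace μ) = _)
  have h2 : (f ^ p).restrict (hmapsp μ) =
      μ ^ p • (LinearMap.id : f.eigenspace μ →ₗ[ℂ] f.eigenspace μ) := by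
    ext y
    exact congrArg Subtype.val (Subtype.ext
      (key μ p y (Module.End.mem_eigenspace_iff.mp y.2)) :
      (⟨(f ^ p) y, hmapsp μ y.2⟩ : f.eigenspace μ) = _)
  rw [h1, h2, LinearMap.map_smul, LinearMap.map_smul, LinearMap.trace_id, smul_eq_mul,
    smul_eq_mul, map_mul, map_natCast, hσ μ hμn]
end
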